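/- Let a ∈ k and let D = e_{-1} + a·e_{p-2}, regarded as a k-linear endomorphism of A = k[X]/(X^p). Then for every integer i with 2 ≤ i ≤ p-1 one has D^i(x) = a·((p-1)!/(p-i)!)·x^{p-i} (where the integer (p-1)!/(p-i)! is interpreted in k), and consequently D^p = -a·D as endomorphisms of A (powers taken with respect to composition). -/

import Mathlib

open Polynomial

set_option synthInstance.maxHeartbeats 1000000
set_option maxHeartbeats 1000000

noncomputable section

/-- The truncated polynomial ring `A = k[X]/(X^p)`. -/
abbrev TruncPoly (k : Type*) [Field k] (p : ℕ) : Type _ :=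
  k[X] ⧸ Ideal.span {(X : k[X]) ^ p}

/-- The image `x` of `X` in `A = k[X]/(X^p)`. -/
def xgen (k : Type*) [Field k] (p : ℕ) : TruncPoly k p :=
  Ideal.Quotient.mk _ (X : k[X])

/-- The Witt algebra `W = Der_k(A)`, a Lie algebra over `k`.
Its `k`-basis is `e_i = x^(i+1)∂` for `-1 ≤ i ≤ p-2`; below, `E n` denotes
`x^n • ∂`, i.e. `E n = e_(n-1)`, so the basis is `E 0, …, E (p-1)`. -/
abbrev Witt (k : Type*) [Field k] (p : ℕ) : Type _ :=
  Derivation k (TruncPoly k p) (TruncPoly k p)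

/-- The Zariski closure of a subset of affine `n`-space `k^n`:  the zero locus of the
vanishing ideal of `S`, i.e. the set of points at which every polynomial vanishing
identically on `S` vanishes. -/
def zariskiClosure (k : Type*) [CommSemiring k] {n : ℕ} (S : Set (Fin n → k)) :
    Set (Fin n → k) :=
  {y | ∀ f : MvPolynomial (Fin n) k,
      (∀ s ∈ S, MvPolynomial.eval s f = 0) → MvPolynomial.eval y f = 0}

/-!
For `n ≥ 2` the derivation `D = ∂ + a x^(p-1) ∂` acts on `x^n` as `∂` does, because
`x^(n-1) · x^(p-1) = 0`; iterating from `D x = 1 + a x^(p-1)` gives the formula for `D^i x`.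
In characteristic `p` the binomial coefficients `(p choose i)`, `0 < i < p`, vanish, so the
Leibniz rule makes `D^p` a derivation. Since `x` generates `A`, `D^p = -a D` then only has to be
checked on `x`, where `D^p x = D (a (p-1)! x) = -a D x` by Wilson's theorem.
-/

open Polynomial Finset

theorem cast_factorial_pred_eq_neg_one (k : Type*) [Ring k] (p : ℕ) [Fact p.Prime] [CharP k p] :
    ((p - 1).factorial : k) = -1 := by
  rw [← map_natCast (ZMod.castHom dvd_rfl k), ZMod.wilsons_lemma, map_neg, map_one]

namespace Derivation

section Leibniz

variable {R A : Type*} [CommSemiring R] [CommSemiring A] [Algebra R A]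

theorem toLinearMap_pow_apply_mul (D : Derivation R A A) (n : ℕ) (a b : A) :
    (D.toLinearMap ^ n) (a * b) = ∑ ij ∈ antidiagonal n,
      n.choose ij.1 • ((D.toLinearMap ^ ij.1) a * (D.toLinearMap ^ ij.2) b) := by
  induction n with
  | zero => simp
  | succ n ih =>
    rw [sum_antidiagonal_choose_succ_nsmul
      (fun i j => (D.toLinearMap ^ i) a * (D.toLinearMap ^ j) b) n]
    simp only [pow_succ', Module.End.mul_apply, ih, map_sum, map_nsmul, coeFn_coe, leibniz,
      smul_eq_mul, nsmul_add, sum_add_distrib]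
    refine congrArg (_ + ·) (sum_congr rfl fun ⟨i, j⟩ hij => ?_)
    rw [n.choose_symm_of_eq_add (HasAntidiagonal.mem_antidiagonal.1 hij).symm, mul_comm]

theorem toLinearMap_pow_char_apply_mul (p : ℕ) [hp : Fact p.Prime] [CharP R p]
    (D : Derivation R A A) (a b : A) :
    (D.toLinearMap ^ p) (a * b) = a • (D.toLinearMap ^ p) b + b • (D.toLinearMap ^ p) a := by
  rw [toLinearMap_pow_apply_mul, sum_eq_add (0, p) (p, 0)]
  · simp [mul_comm]
  · simp [hp.out.ne_zero]
  · rintro ⟨i, j⟩ hij ⟨hi0, hj0⟩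
    rw [HasAntidiagonal.mem_antidiagonal] at hij
    have hi : i ≠ 0 := by rintro rfl; simp_all
    have hj : j ≠ 0 := by rintro rfl; simp_all
    rw [← Nat.cast_smul_eq_nsmul R,
      (CharP.cast_eq_zero_iff R p _).2 (hp.out.dvd_choose_self hi (by omega)), zero_smul]
  · simp
  · simp

end Leibniz

def powChar {R A : Type*} [CommSemiring R] [CommRing A] [Algebra R A] (p : ℕ) [Fact p.Prime]
    [CharP R p] (D : Derivation R A A) : Derivation R A A :=
  mk' (D.toLinearMap ^ p) (toLinearMap_pow_char_apply_mul p D)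

section Truncated

variable {k A : Type*} [CommRing k] [CommRing A] [Algebra k A] {p : ℕ} {x : A} {a : k}
  {D : Derivation k A A}

theorem apply_pow_of_two_le (hx : x ^ p = 0) (hDx : D x = 1 + a • x ^ (p - 1)) {n : ℕ}
    (hn : 2 ≤ n) : D (x ^ n) = n • x ^ (n - 1) := by
  rw [leibniz_pow, hDx, smul_add, smul_eq_mul, mul_one, smul_comm, smul_eq_mul, ← pow_add,
    pow_eq_zero_of_le (show p ≤ n - 1 + (p - 1) by omega) hx, smul_zero, add_zero]

theorem toLinearMap_pow_apply_of_two_le (hx : x ^ p = 0) (hDx : D x = 1 + a • x ^ (p - 1))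
    {i : ℕ} (hi : 2 ≤ i) (hip : i ≤ p - 1) :
    (D.toLinearMap ^ i) x = (a * (p - 1).descFactorial (i - 1)) • x ^ (p - i) := by
  induction i, hi using Nat.le_induction with
  | base =>
    rw [pow_two, Module.End.mul_apply, coeFn_coe, hDx, map_add, map_one_eq_zero,
      zero_add, map_smul, apply_pow_of_two_le hx hDx (by omega), ← Nat.cast_smul_eq_nsmul k,
      smul_smul]
    simp [show p - 1 - 1 = p - 2 by omega]
  | succ i hi ih =>
    rw [pow_succ', Module.End.mul_apply, ih (by omega), coeFn_coe, map_smul,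
      apply_pow_of_two_le hx hDx (by omega), ← Nat.cast_smul_eq_nsmul k, smul_smul,
      show p - i - 1 = p - (i + 1) by omega, show i + 1 - 1 = i - 1 + 1 by omega,
      Nat.descFactorial_succ, show p - 1 - (i - 1) = p - i by omega]
    push_cast
    ring_nf

theorem toLinearMap_pow_char_apply [Fact p.Prime] [CharP k p] (hp : 3 ≤ p) (hx : x ^ p = 0)
    (hDx : D x = 1 + a • x ^ (p - 1)) : (D.toLinearMap ^ p) x = (-a) • D x := by
  rw [← Nat.sub_add_cancel (by omega : 1 ≤ p), pow_succ', Module.End.mul_apply,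
    toLinearMap_pow_apply_of_two_le hx hDx (by omega) le_rfl, Nat.sub_sub_self (by omega),
    pow_one, coeFn_coe, map_smul, Nat.descFactorial_eq_div (by omega), Nat.sub_sub_self (by omega),
    Nat.factorial_one, Nat.div_one, cast_factorial_pred_eq_neg_one, mul_neg_one]

end Truncated

end Derivation

theorem xgen_pow_self (k : Type*) [Field k] (p : ℕ) : xgen k p ^ p = 0 :=
  Ideal.Quotient.eq_zero_iff_mem.2 (Ideal.mem_span_singleton_self _)

theorem adjoin_xgen (k : Type*) [Field k] (p : ℕ) : Algebra.adjoin k {xgen k p} = ⊤ := by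
  have : {xgen k p} = Ideal.Quotient.mkₐ k (Ideal.span {(X : k[X]) ^ p}) '' {X} :=
    (Set.image_singleton).symm
  rw [this, Algebra.adjoin_image, adjoin_X, Algebra.map_top, AlgHom.range_eq_top]
  exact Ideal.Quotient.mkₐ_surjective k _

theorem witt_Dpowers_general
    (k : Type*) [Field k] (p : ℕ) [Fact p.Prime] [CharP k p]
    (hp : 3 < p)
    (δ : Witt k p) (hδ : δ (xgen k p) = 1)
    (E : ℕ → Witt k p) (hE : ∀ n, E n = (xgen k p) ^ n • δ)
    (a : k) :
    (∀ i : ℕ, 2 ≤ i → i ≤ p - 1 →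
      (((E 0 + a • E (p - 1)).toLinearMap : Module.End k (TruncPoly k p)) ^ i) (xgen k p)
        = (a * ((Nat.factorial (p - 1) / Nat.factorial (p - i) : ℕ) : k))
            • (xgen k p) ^ (p - i))
    ∧ ((E 0 + a • E (p - 1)).toLinearMap : Module.End k (TruncPoly k p)) ^ p
        = (-a) • ((E 0 + a • E (p - 1)).toLinearMap : Module.End k (TruncPoly k p)) := by
  set D := E 0 + a • E (p - 1)
  have hx := xgen_pow_self k p
  have hDx : D (xgen k p) = 1 + a • xgen k p ^ (p - 1) := by
    simp [D, hE, hδ]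
  refine ⟨fun i hi hip => ?_, ?_⟩
  · rw [D.toLinearMap_pow_apply_of_two_le hx hDx hi hip, Nat.descFactorial_eq_div (by omega),
      show p - 1 - (i - 1) = p - i by omega]
  · have hpow : D.powChar p = (-a) • D :=
      Derivation.ext_of_adjoin_eq_top _ (adjoin_xgen k p) <| Set.eqOn_singleton.2 <|
        D.toLinearMap_pow_char_apply hp.le hx hDx
    exact congrArg Derivation.toLinearMap hpow

/-- for `D = e₋₁ + a·e_(p-2)` regarded as an endomorphism of `A`,
`D^i(x) = a·((p-1)!/(p-i)!)·x^(p-i)` for `2 ≤ i ≤ p-1`, and `D^p = -a·D`. -/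
theorem witt_Dpowers
    (k : Type*) [Field k] [IsAlgClosed k] (p : ℕ) [Fact p.Prime] [CharP k p]
    (hp : 3 < p)
    (δ : Witt k p) (hδ : δ (xgen k p) = 1)
    (E : ℕ → Witt k p) (hE : ∀ n, E n = (xgen k p) ^ n • δ)
    (a : k) :
    (∀ i : ℕ, 2 ≤ i → i ≤ p - 1 →
      (((E 0 + a • E (p - 1)).toLinearMap : Module.End k (TruncPoly k p)) ^ i) (xgen k p)
        = (a * ((Nat.factorial (p - 1) / Nat.factorial (p - i) : ℕ) : k))
            • (xgen k p) ^ (p - i))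
    ∧ ((E 0 + a • E (p - 1)).toLinearMap : Module.End k (TruncPoly k p)) ^ p
        = (-a) • ((E 0 + a • E (p - 1)).toLinearMap : Module.End k (TruncPoly k p)) :=
  witt_Dpowers_general k p hp δ hδ E hE a
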